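/- If a measurement assemblage {M_{a|x}} is jointly measurable, i.e., M_{a|x} = Σ_λ p(a|x,λ) G_λ for some POVM {G_λ} and conditional probabilities p(a|x,λ), then for any density matrix ρ the state assemblage σ_{a|x} = ρ^{1/2} M_{a|x} ρ^{1/2} admits a local-hidden-state model, i.e., σ_{a|x} = Σ_λ q(λ) p(a|x,λ) ρ_λ for some probability distribution q and density matrices ρ_λ. -/

import Mathlib

open Matrix Kronecker BigOperators ComplexOrder

noncomputable section

/-- A density matrix: positive semidefinite with unit trace. -/
def IsDensity {d : ℕ} (ρ : Matrix (Fin d) (Fin d) ℂ) : Prop :=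
  ρ.PosSemidef ∧ ρ.trace = 1

/-- A POVM: positive semidefinite effects summing to the identity. -/
def IsPOVM {d nl : ℕ} (G : Fin nl → Matrix (Fin d) (Fin d) ℂ) : Prop :=
  (∀ l, (G l).PosSemidef) ∧ ∑ l, G l = 1

/-- A measurement assemblage: for each setting `x`, a POVM `a ↦ M x a`. -/
def IsMA {d na nx : ℕ} (M : Fin nx → Fin na → Matrix (Fin d) (Fin d) ℂ) : Prop :=
  (∀ x a, (M x a).PosSemidef) ∧ ∀ x, ∑ a, M x a = 1

/-- Joint measurability: `M x a = ∑ λ p(a|x,λ) G λ` for a parent POVM `G`. -/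
def JM {d na nx : ℕ} (M : Fin nx → Fin na → Matrix (Fin d) (Fin d) ℂ) : Prop :=
  ∃ (nl : ℕ) (G : Fin nl → Matrix (Fin d) (Fin d) ℂ)
    (p : Fin nx → Fin na → Fin nl → ℝ),
    IsPOVM G ∧ (∀ x a l, 0 ≤ p x a l) ∧ (∀ x l, ∑ a, p x a l = 1) ∧
    ∀ x a, M x a = ∑ l, (p x a l : ℂ) • G l

/-- A state assemblage: PSD elements with an `x`-independent reduced density matrix. -/
def IsSA {d na nx : ℕ} (σ : Fin nx → Fin na → Matrix (Fin d) (Fin d) ℂ) : Prop :=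
  (∀ x a, (σ x a).PosSemidef) ∧
  ∃ ρ : Matrix (Fin d) (Fin d) ℂ, IsDensity ρ ∧ ∀ x, ∑ a, σ x a = ρ

/-- Local-hidden-state model: `σ x a = ∑ λ q(λ) p(a|x,λ) ρ_λ`. -/
def LHS {d na nx : ℕ} (σ : Fin nx → Fin na → Matrix (Fin d) (Fin d) ℂ) : Prop :=
  ∃ (nl : ℕ) (q : Fin nl → ℝ) (p : Fin nx → Fin na → Fin nl → ℝ)
    (ρ : Fin nl → Matrix (Fin d) (Fin d) ℂ),
    (∀ l, 0 ≤ q l) ∧ (∑ l, q l = 1) ∧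
    (∀ x a l, 0 ≤ p x a l) ∧ (∀ x l, ∑ a, p x a l = 1) ∧
    (∀ l, IsDensity (ρ l)) ∧
    ∀ x a, σ x a = ∑ l, ((q l * p x a l : ℝ) : ℂ) • ρ l

/-- Incompatibility robustness. -/
def IR {d na nx : ℕ} (B : Fin nx → Fin na → Matrix (Fin d) (Fin d) ℂ) : ℝ :=
  sInf {t : ℝ | 0 ≤ t ∧ ∃ N, IsMA N ∧
    JM (fun x a => (((1 + t : ℝ))⁻¹ : ℂ) • (B x a + (t : ℂ) • N x a))}

/-- Steering robustness. -/
def SR {d na nx : ℕ} (σ : Fin nx → Fin na → Matrix (Fin d) (Fin d) ℂ) : ℝ :=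
  sInf {t : ℝ | 0 ≤ t ∧ ∃ ξ, IsSA ξ ∧
    LHS (fun x a => (((1 + t : ℝ))⁻¹ : ℂ) • (σ x a + (t : ℂ) • ξ x a))}

/-- Incompatible weight. -/
def IW {d na nx : ℕ} (B : Fin nx → Fin na → Matrix (Fin d) (Fin d) ℂ) : ℝ :=
  sInf {t : ℝ | 0 ≤ t ∧ t ≤ 1 ∧ ∃ N O, IsMA N ∧ JM O ∧
    ∀ x a, B x a = (t : ℂ) • N x a + ((1 - t : ℝ) : ℂ) • O x a}

/-- Steerable weight. -/
def SW {d na nx : ℕ} (σ : Fin nx → Fin na → Matrix (Fin d) (Fin d) ℂ) : ℝ :=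
  sInf {t : ℝ | 0 ≤ t ∧ t ≤ 1 ∧ ∃ ξ τ, IsSA ξ ∧ LHS τ ∧
    ∀ x a, σ x a = (t : ℂ) • ξ x a + ((1 - t : ℝ) : ℂ) • τ x a}

/-- Positive map on matrices. -/
def PosMap {d : ℕ} (E : Matrix (Fin d) (Fin d) ℂ →ₗ[ℂ] Matrix (Fin d) (Fin d) ℂ) : Prop :=
  ∀ X, X.PosSemidef → (E X).PosSemidef

/-- Trace-nonincreasing on PSD matrices. -/
def TNI {d : ℕ} (E : Matrix (Fin d) (Fin d) ℂ →ₗ[ℂ] Matrix (Fin d) (Fin d) ℂ) : Prop :=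
  ∀ X : Matrix (Fin d) (Fin d) ℂ, X.PosSemidef → (E X).trace.re ≤ X.trace.re

/-- `Ed` is the Hilbert–Schmidt adjoint of `E`. -/
def IsAdjoint {d : ℕ} (E Ed : Matrix (Fin d) (Fin d) ℂ →ₗ[ℂ] Matrix (Fin d) (Fin d) ℂ) : Prop :=
  ∀ X Y, ((E X)ᴴ * Y).trace = (Xᴴ * (Ed Y)).trace

/-- Partial trace over the first tensor factor. -/
def ptraceA {d d' : ℕ} (M : Matrix (Fin d × Fin d') (Fin d × Fin d') ℂ) :
    Matrix (Fin d') (Fin d') ℂ :=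
  Matrix.of fun i j => ∑ k : Fin d, M (k, i) (k, j)

/-- The map `E ⊗ id` acting on bipartite matrices. -/
def tensId {d d' : ℕ} (E : Matrix (Fin d) (Fin d) ℂ →ₗ[ℂ] Matrix (Fin d) (Fin d) ℂ)
    (M : Matrix (Fin d × Fin d') (Fin d × Fin d') ℂ) :
    Matrix (Fin d × Fin d') (Fin d × Fin d') ℂ :=
  Matrix.of fun p q => E (Matrix.of fun i k => M (i, p.2) (k, q.2)) p.1 q.1

/-- The positive semidefinite square root, as `Matrix.PosSemidef.sqrt` was defined in the older Mathlib. -/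
def posSemidefSqrt {d : ℕ} {ρ : Matrix (Fin d) (Fin d) ℂ} (hρ : ρ.PosSemidef) :
    Matrix (Fin d) (Fin d) ℂ :=
  hρ.1.eigenvectorUnitary.1 * diagonal ((↑) ∘ (√·) ∘ hρ.1.eigenvalues) *
    (star hρ.1.eigenvectorUnitary : Matrix (Fin d) (Fin d) ℂ)

/-! With `S = ρ^{1/2}`, the conjugated parent POVM `σ_λ = S G_λ S` is an ensemble for `ρ`:
each `σ_λ` is positive semidefinite and `∑ λ, σ_λ = S S = ρ`. Normalizing, `σ_λ = q(λ) ρ_λ`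
with `q(λ) = tr σ_λ` and `ρ_λ` a density matrix, so that
`S M_{a|x} S = ∑ λ, q(λ) p(a|x,λ) ρ_λ` is a local-hidden-state model. -/
section

open scoped MatrixOrder

variable {d : ℕ}

lemma posSemidefSqrt_eq_sqrt {ρ : Matrix (Fin d) (Fin d) ℂ} (hρ : ρ.PosSemidef) :
    posSemidefSqrt hρ = CFC.sqrt ρ := by
  rw [CFC.sqrt_eq_real_sqrt ρ hρ.nonneg, cfcₙ_eq_cfc, hρ.1.cfc_eq]
  simp [IsHermitian.cfc, posSemidefSqrt, Unitary.conjStarAlgAut_apply]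

lemma conjTranspose_posSemidefSqrt {ρ : Matrix (Fin d) (Fin d) ℂ} (hρ : ρ.PosSemidef) :
    (posSemidefSqrt hρ)ᴴ = posSemidefSqrt hρ := by
  rw [posSemidefSqrt_eq_sqrt]
  exact (CFC.sqrt_nonneg ρ).isSelfAdjoint

lemma posSemidefSqrt_mul_self {ρ : Matrix (Fin d) (Fin d) ℂ} (hρ : ρ.PosSemidef) :
    posSemidefSqrt hρ * posSemidefSqrt hρ = ρ := by
  rw [posSemidefSqrt_eq_sqrt]
  exact CFC.sqrt_mul_sqrt_self ρ hρ.nonneg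

/-- `ρ₀` serves only as the normalization of `σ = 0`. -/
lemma Matrix.PosSemidef.exists_smul_isDensity {σ ρ₀ : Matrix (Fin d) (Fin d) ℂ}
    (hσ : σ.PosSemidef) (hρ₀ : IsDensity ρ₀) :
    ∃ (t : ℝ) (τ : Matrix (Fin d) (Fin d) ℂ), 0 ≤ t ∧ IsDensity τ ∧ σ = (t : ℂ) • τ := by
  obtain ⟨t, ht, htr⟩ := RCLike.nonneg_iff_exists_ofReal.mp hσ.trace_nonneg
  rcases ht.eq_or_lt with rfl | ht
  · refine ⟨0, ρ₀, le_rfl, hρ₀, ?_⟩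
    simp [hσ.trace_eq_zero_iff.mp (by simpa using htr.symm)]
  · have ht' : (t : ℂ) ≠ 0 := Complex.ofReal_ne_zero.mpr ht.ne'
    refine ⟨t, (t : ℂ)⁻¹ • σ, ht.le, ⟨hσ.smul (by positivity), ?_⟩, ?_⟩
    · rw [trace_smul, ← htr, smul_eq_mul]
      exact inv_mul_cancel₀ ht'
    · rw [smul_smul, mul_inv_cancel₀ ht', one_smul]

lemma lhs_sum_smul_of_sum_eq {na nx nl : ℕ} {σ : Fin nl → Matrix (Fin d) (Fin d) ℂ}
    {ρ : Matrix (Fin d) (Fin d) ℂ} {p : Fin nx → Fin na → Fin nl → ℝ}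
    (hσ : ∀ l, (σ l).PosSemidef) (hsum : ∑ l, σ l = ρ) (hρ : IsDensity ρ)
    (hp0 : ∀ x a l, 0 ≤ p x a l) (hp1 : ∀ x l, ∑ a, p x a l = 1) :
    LHS fun x a => ∑ l, (p x a l : ℂ) • σ l := by
  choose q τ hq hτ hστ using fun l => (hσ l).exists_smul_isDensity hρ
  have hq1 : ∑ l, q l = 1 := by
    have htrace : ∀ l, (σ l).trace = q l := fun l => by
      rw [hστ l, trace_smul, (hτ l).2, smul_eq_mul, mul_one]
    exact_mod_cast (by simp_rw [← htrace, ← trace_sum, hsum, hρ.2] : ∑ l, (q l : ℂ) = 1)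
  refine ⟨nl, q, p, τ, hq, hq1, hp0, hp1, hτ, fun x a => Finset.sum_congr rfl fun l _ => ?_⟩
  rw [hστ l, smul_smul, Complex.ofReal_mul, mul_comm]

end

theorem jm_conj_lhs_general {d na nx : ℕ}
    (M : Fin nx → Fin na → Matrix (Fin d) (Fin d) ℂ)
    (hJM : JM M)
    (ρ : Matrix (Fin d) (Fin d) ℂ) (hρ : ρ.PosSemidef) (hρ1 : ρ.trace = 1) :
    LHS (fun x a => posSemidefSqrt hρ * M x a * posSemidefSqrt hρ) := by
  obtain ⟨nl, G, p, ⟨hG, hG1⟩, hp0, hp1, hM⟩ := hJM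
  set S := posSemidefSqrt hρ
  have hσ : ∀ l, (S * G l * S).PosSemidef := fun l => by
    have h := (hG l).mul_mul_conjTranspose_same S
    rwa [conjTranspose_posSemidefSqrt hρ] at h
  have hsum : ∑ l, S * G l * S = ρ := by
    rw [← Finset.sum_mul, ← Finset.mul_sum, hG1, mul_one, posSemidefSqrt_mul_self]
  have hconj : ∀ x a, S * M x a * S = ∑ l, (p x a l : ℂ) • (S * G l * S) := fun x a => by
    simp only [hM x a, Finset.mul_sum, Finset.sum_mul, Matrix.mul_smul, Matrix.smul_mul]
  simpa only [hconj] using lhs_sum_smul_of_sum_eq hσ hsum ⟨hρ, hρ1⟩ hp0 hp1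

/-- conjugating a jointly measurable assemblage by `ρ^{1/2}` yields
an LHS state assemblage. -/
theorem jm_conj_lhs {d na nx : ℕ}
    (M : Fin nx → Fin na → Matrix (Fin d) (Fin d) ℂ)
    (hM : IsMA M) (hJM : JM M)
    (ρ : Matrix (Fin d) (Fin d) ℂ) (hρ : ρ.PosSemidef) (hρ1 : ρ.trace = 1) :
    LHS (fun x a => posSemidefSqrt hρ * M x a * posSemidefSqrt hρ) :=
  jm_conj_lhs_general M hJM ρ hρ hρ1
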